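/- Let h : [0, π/2] → ℝ be differentiable and satisfy the linear differential equation h(t) cos t = h'(t) sin t for all t ∈ [0, π/2]. Then there exists a real constant c such that h(t) = c sin t for all t ∈ [0, π/2]. -/

import Mathlib

open Real Set

/-!
The equation says that the Wronskian `h' sin - h cos` vanishes, so `h / sin` has zero derivative
on `(0, π/2]`, where `sin` does not vanish, and is therefore constant there. At `t = 0` the
equation reads `h 0 = 0`.
-/

theorem HasDerivWithinAt.div_eq_zero_of_mul_eq {𝕜 𝕜' : Type*} [NontriviallyNormedField 𝕜]
    [NontriviallyNormedField 𝕜'] [NormedAlgebra 𝕜 𝕜'] {c d : 𝕜 → 𝕜'} {c' d' : 𝕜'} {s : Set 𝕜}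
    {x : 𝕜} (hc : HasDerivWithinAt c c' s x) (hd : HasDerivWithinAt d d' s x) (hx : d x ≠ 0)
    (hcd : c x * d' = c' * d x) : HasDerivWithinAt (fun y => c y / d y) 0 s x := by
  simpa [hcd] using hc.fun_div hd hx

theorem Convex.is_const_of_hasDerivWithinAt_zero {𝕜 G : Type*} [RCLike 𝕜] [NormedAddCommGroup G]
    [NormedSpace 𝕜 G] {f : 𝕜 → G} {s : Set 𝕜} {x y : 𝕜} (hs : Convex ℝ s)
    (hf : ∀ z ∈ s, HasDerivWithinAt f 0 s z) (hx : x ∈ s) (hy : y ∈ s) : f x = f y := by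
  have := norm_image_sub_le_of_norm_hasDerivWithin_le hf (fun _ _ => norm_zero.le) hs hx hy
  rw [zero_mul, norm_le_zero_iff, sub_eq_zero] at this
  exact this.symm

theorem sin_pos_of_mem_Ioc_zero_pi_div_two {t : ℝ} (ht : t ∈ Ioc 0 (π / 2)) : 0 < sin t :=
  sin_pos_of_pos_of_lt_pi ht.1 (by linarith [ht.2, pi_pos])

/-- If `h : [0, π/2] → ℝ` is differentiable with derivative `h'` and satisfies
the linear differential equation `h t cos t = h' t sin t` on `[0, π/2]`, then
`h t = c sin t` on `[0, π/2]` for some real constant `c`. -/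
theorem solutions_of_ode (h h' : ℝ → ℝ)
    (hderiv : ∀ t ∈ Icc (0:ℝ) (π/2), HasDerivWithinAt h (h' t) (Icc (0:ℝ) (π/2)) t)
    (hode : ∀ t ∈ Icc (0:ℝ) (π/2), h t * Real.cos t = h' t * Real.sin t) :
    ∃ c : ℝ, ∀ t ∈ Icc (0:ℝ) (π/2), h t = c * Real.sin t := by
  have hquot : ∀ t ∈ Ioc 0 (π / 2), HasDerivWithinAt (fun y => h y / sin y) 0 (Ioc 0 (π / 2)) t :=
    fun t ht => ((hderiv t (Ioc_subset_Icc_self ht)).mono Ioc_subset_Icc_self).div_eq_zero_of_mul_eq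
      (hasDerivAt_sin t).hasDerivWithinAt (sin_pos_of_mem_Ioc_zero_pi_div_two ht).ne'
      (hode t (Ioc_subset_Icc_self ht))
  have hπ : π / 2 ∈ Ioc 0 (π / 2) := ⟨by positivity, le_rfl⟩
  refine ⟨h (π / 2), fun t ht => ?_⟩
  rcases ht.1.eq_or_lt with rfl | ht0
  · simpa using hode 0 ht
  · have hpos := sin_pos_of_mem_Ioc_zero_pi_div_two ⟨ht0, ht.2⟩
    have hconst := (convex_Ioc 0 (π / 2)).is_const_of_hasDerivWithinAt_zero hquot ⟨ht0, ht.2⟩ hπ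
    rwa [sin_pi_div_two, div_one, div_eq_iff hpos.ne'] at hconst
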